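/- Let A ∈ ℂ^{M×N_a} and B ∈ ℂ^{M×N_b} be matrices with unit ℓ²-norm columns, with coherences μ_a and μ_b respectively and mutual coherence μ_m. Let z = A x + B e where supp(x) = X with ‖x‖₀ = n_x and ‖e‖₀ = n_e, and assume μ_m² · 2 n_x n_e < [1 − μ_a(n_x−1)]_+ · [1 − μ_b(2n_e−1)]_+. Then A_X^H A_X is invertible, and with R_X = I_M − A_X (A_X^H A_X)^{−1} A_X^H, the vector e is the unique solution of the projected ℓ⁰ problem: for every e' ∈ ℂ^{N_b} with ‖e'‖₀ ≤ n_e and R_X B e' = R_X z, one has e' = e. -/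

import Mathlib

open scoped BigOperators ComplexConjugate
open Matrix

/-- Coherence of a matrix: max over distinct column pairs of |aₖᴴ aₗ| (0 if fewer than 2 columns). -/
noncomputable def coh {m n : Type*} [Fintype m] [Fintype n] (A : Matrix m n ℂ) : ℝ :=
  ⨆ k, ⨆ l, ⨆ _ : k ≠ l, ‖∑ i, conj (A i k) * A i l‖

/-- Mutual coherence between two matrices: max over column pairs of |aₖᴴ bₗ|. -/
noncomputable def mcoh {m na nb : Type*} [Fintype m] [Fintype na] [Fintype nb]
    (A : Matrix m na ℂ) (B : Matrix m nb ℂ) : ℝ :=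
  ⨆ k, ⨆ l, ‖∑ i, conj (A i k) * B i l‖

/-- All columns have unit ℓ²-norm. -/
def unitCols {m n : Type*} [Fintype m] (A : Matrix m n ℂ) : Prop :=
  ∀ k, ∑ i, ‖A i k‖ ^ 2 = 1

/-- Number of nonzero entries of a vector. -/
noncomputable def l0 {n : Type*} (v : n → ℂ) : ℕ := {i | v i ≠ 0}.ncard

/-- ℓ¹ norm of a vector. -/
noncomputable def l1 {n : Type*} [Fintype n] (v : n → ℂ) : ℝ := ∑ i, ‖v i‖

/-- Squared ℓ² norm of a vector. -/
noncomputable def l2sq {n : Type*} [Fintype n] (v : n → ℂ) : ℝ := ∑ i, ‖v i‖ ^ 2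

/-- Submatrix consisting of the columns with index in `E`. -/
def colsub {m n : Type*} (B : Matrix m n ℂ) (E : Finset n) : Matrix m {j // j ∈ E} ℂ :=
  fun i j => B i j.val

/-- Orthogonal projector onto the orthogonal complement of the column span of `B_E`. -/
noncomputable def projC {m n : Type*} [Fintype m] [DecidableEq m] [DecidableEq n]
    (B : Matrix m n ℂ) (E : Finset n) : Matrix m m ℂ :=
  1 - colsub B E * ((colsub B E)ᴴ * colsub B E)⁻¹ * (colsub B E)ᴴ

section Helpers

lemma coh_nonneg' {m n : Type*} [Fintype m] [Fintype n] (A : Matrix m n ℂ) : 0 ≤ coh A :=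
  Real.iSup_nonneg fun _ => Real.iSup_nonneg fun _ => Real.iSup_nonneg fun _ => norm_nonneg _

lemma mcoh_nonneg' {m na nb : Type*} [Fintype m] [Fintype na] [Fintype nb]
    (A : Matrix m na ℂ) (B : Matrix m nb ℂ) : 0 ≤ mcoh A B :=
  Real.iSup_nonneg fun _ => Real.iSup_nonneg fun _ => norm_nonneg _

lemma coh_le' {m n : Type*} [Fintype m] [Fintype n] (A : Matrix m n ℂ) {k l : n} (h : k ≠ l) :
    ‖∑ i, conj (A i k) * A i l‖ ≤ coh A := by
  have h1 : ‖∑ i, conj (A i k) * A i l‖ ≤ ⨆ _ : k ≠ l, ‖∑ i, conj (A i k) * A i l‖ :=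
    le_of_eq (ciSup_pos (f := fun _ => ‖∑ i, conj (A i k) * A i l‖) h).symm
  refine h1.trans ?_
  refine le_trans (le_ciSup (f := fun l => ⨆ _ : k ≠ l, ‖∑ i, conj (A i k) * A i l‖)
    (Set.Finite.bddAbove (Set.finite_range _)) l) ?_
  exact le_ciSup (f := fun k => ⨆ l, ⨆ _ : k ≠ l, ‖∑ i, conj (A i k) * A i l‖)
    (Set.Finite.bddAbove (Set.finite_range _)) k

lemma mcoh_le' {m na nb : Type*} [Fintype m] [Fintype na] [Fintype nb]
    (A : Matrix m na ℂ) (B : Matrix m nb ℂ) (k : na) (l : nb) :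
    ‖∑ i, conj (A i k) * B i l‖ ≤ mcoh A B := by
  refine le_trans (le_ciSup (f := fun l => ‖∑ i, conj (A i k) * B i l‖)
    (Set.Finite.bddAbove (Set.finite_range _)) l) ?_
  exact le_ciSup (f := fun k => ⨆ l, ‖∑ i, conj (A i k) * B i l‖)
    (Set.Finite.bddAbove (Set.finite_range _)) k

lemma normsq_re' (z : ℂ) : ‖z‖ ^ 2 = (conj z * z).re := by
  rw [mul_comm, Complex.mul_conj, Complex.ofReal_re, ← Complex.sq_norm]

lemma inner_mulVec' {M : ℕ} {ι κ : Type*} [Fintype ι] [Fintype κ]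
    (C : Matrix (Fin M) ι ℂ) (D : Matrix (Fin M) κ ℂ) (u : ι → ℂ) (v : κ → ℂ) :
    ∑ i, conj (C.mulVec u i) * (D.mulVec v i)
      = ∑ k, ∑ l, conj (u k) * (∑ i, conj (C i k) * D i l) * v l := by
  have L : ∑ i, conj (C.mulVec u i) * (D.mulVec v i)
      = ∑ i, ∑ k, ∑ l, conj (u k) * (conj (C i k) * D i l) * v l := by
    refine Finset.sum_congr rfl fun i _ => ?_
    simp only [Matrix.mulVec, dotProduct, map_sum, Finset.sum_mul, Finset.mul_sum]
    rw [Finset.sum_comm]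
    refine Finset.sum_congr rfl fun k _ => Finset.sum_congr rfl fun l _ => ?_
    rw [_root_.map_mul]; ring
  rw [L, Finset.sum_comm]
  refine Finset.sum_congr rfl fun k _ => ?_
  rw [Finset.sum_comm]
  refine Finset.sum_congr rfl fun l _ => ?_
  rw [Finset.mul_sum, Finset.sum_mul]

lemma sum_sq_sub' {M : ℕ} (x y : Fin M → ℂ) :
    ∑ i, ‖x i - y i‖ ^ 2
      = ∑ i, ‖x i‖ ^ 2 + ∑ i, ‖y i‖ ^ 2 - 2 * (∑ i, conj (x i) * y i).re := by
  have h : ∀ a b : ℂ, ‖a - b‖ ^ 2 = ‖a‖ ^ 2 + ‖b‖ ^ 2 - 2 * (conj a * b).re := by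
    intro a b
    simp only [normsq_re', Complex.mul_re, Complex.sub_re, Complex.sub_im,
      Complex.conj_re, Complex.conj_im, map_sub]
    ring
  simp only [h, Complex.re_sum, Finset.sum_sub_distrib, Finset.sum_add_distrib, Finset.mul_sum]

lemma key_quad' {ι : Type*} [Fintype ι] [DecidableEq ι] (g : ι → ι → ℂ) (μ : ℝ) (hμ : 0 ≤ μ)
    (hdiag : ∀ k, g k k = 1) (hoff : ∀ k l, k ≠ l → ‖g k l‖ ≤ μ)
    (T : Finset ι) (u : ι → ℂ) (hu : ∀ k, k ∉ T → u k = 0) :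
    (1 - μ * ((T.card : ℝ) - 1)) * ∑ k, ‖u k‖ ^ 2
      ≤ (∑ k, ∑ l, conj (u k) * g k l * u l).re := by
  classical
  have hrs : ∑ k, ‖u k‖ ^ 2 = ∑ k ∈ T, ‖u k‖ ^ 2 :=
    (Finset.sum_subset (Finset.subset_univ T) fun k _ hk => by simp [hu k hk]).symm
  have hout : ∑ k, ∑ l, conj (u k) * g k l * u l
      = ∑ k ∈ T, ∑ l ∈ T, conj (u k) * g k l * u l := by
    refine ((Finset.sum_subset (Finset.subset_univ T) fun k _ hk => by simp [hu k hk]).symm).trans ?_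
    refine Finset.sum_congr rfl fun k _ => ?_
    exact (Finset.sum_subset (Finset.subset_univ T) fun l _ hl => by simp [hu l hl]).symm
  rw [hout, hrs, Complex.re_sum]
  set S1 := ∑ k ∈ T, ‖u k‖ with hS1
  set S2 := ∑ k ∈ T, ‖u k‖ ^ 2 with hS2def
  have hsplit : ∀ k ∈ T, ‖u k‖ ^ 2 - μ * ∑ l ∈ T.erase k, ‖u k‖ * ‖u l‖
      ≤ (∑ l ∈ T, conj (u k) * g k l * u l).re := by
    intro k hk
    rw [← Finset.add_sum_erase T _ hk, Complex.add_re, Complex.re_sum]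
    have hdg : (conj (u k) * g k k * u k).re = ‖u k‖ ^ 2 := by
      rw [hdiag k, mul_one, ← normsq_re']
    rw [hdg, Finset.mul_sum]
    have hterm : ∀ l ∈ T.erase k, -(μ * (‖u k‖ * ‖u l‖)) ≤ (conj (u k) * g k l * u l).re := by
      intro l hl
      have hne : k ≠ l := fun h => (Finset.ne_of_mem_erase hl) h.symm
      have h1 : -(conj (u k) * g k l * u l).re ≤ ‖conj (u k) * g k l * u l‖ := by
        have := Complex.abs_re_le_norm (conj (u k) * g k l * u l)
        cases abs_cases ((conj (u k) * g k l * u l).re) with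
        | inl h => linarith [h.1, norm_nonneg (conj (u k) * g k l * u l)]
        | inr h => linarith [h.1]
      have h2 : ‖conj (u k) * g k l * u l‖ ≤ μ * (‖u k‖ * ‖u l‖) := by
        rw [norm_mul, norm_mul]
        have hc : ‖conj (u k)‖ = ‖u k‖ := by simp
        rw [hc]
        calc ‖u k‖ * ‖g k l‖ * ‖u l‖ ≤ ‖u k‖ * μ * ‖u l‖ := by
              exact mul_le_mul_of_nonneg_right
                (mul_le_mul_of_nonneg_left (hoff k l hne) (norm_nonneg _)) (norm_nonneg _)
          _ = μ * (‖u k‖ * ‖u l‖) := by ring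
      linarith
    have h3 := Finset.sum_le_sum hterm
    rw [Finset.sum_neg_distrib] at h3
    linarith
  have hmain : S2 - μ * ∑ k ∈ T, ∑ l ∈ T.erase k, ‖u k‖ * ‖u l‖
      ≤ ∑ k ∈ T, (∑ l ∈ T, conj (u k) * g k l * u l).re := by
    have := Finset.sum_le_sum hsplit
    rw [Finset.sum_sub_distrib, ← Finset.mul_sum] at this
    exact this
  have hE : ∑ k ∈ T, ∑ l ∈ T.erase k, ‖u k‖ * ‖u l‖ = S1 ^ 2 - S2 := by
    have hin : ∀ k ∈ T, ∑ l ∈ T.erase k, ‖u k‖ * ‖u l‖ = ‖u k‖ * S1 - ‖u k‖ ^ 2 := by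
      intro k hk
      rw [← Finset.mul_sum, Finset.sum_erase_eq_sub hk]
      ring
    rw [Finset.sum_congr rfl hin, Finset.sum_sub_distrib, ← Finset.sum_mul]
    ring
  rw [hE] at hmain
  have hcs : S1 ^ 2 ≤ (T.card : ℝ) * S2 := sq_sum_le_card_mul_sum_sq
  have hS2 : 0 ≤ S2 := Finset.sum_nonneg fun k _ => sq_nonneg _
  nlinarith [hmain, hcs, hμ, hS2]

lemma l1_le_sqrt' {ι : Type*} [Fintype ι] (T : Finset ι) (u : ι → ℂ)
    (hu : ∀ k, k ∉ T → u k = 0) :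
    ∑ k, ‖u k‖ ≤ Real.sqrt (T.card) * Real.sqrt (∑ k, ‖u k‖ ^ 2) := by
  have h1 : ∑ k, ‖u k‖ = ∑ k ∈ T, ‖u k‖ :=
    (Finset.sum_subset (Finset.subset_univ T) fun k _ hk => by simp [hu k hk]).symm
  have h2 : ∑ k, ‖u k‖ ^ 2 = ∑ k ∈ T, ‖u k‖ ^ 2 :=
    (Finset.sum_subset (Finset.subset_univ T) fun k _ hk => by simp [hu k hk]).symm
  rw [h1, h2, ← Real.sqrt_mul (by positivity)]
  have hcs : (∑ k ∈ T, ‖u k‖) ^ 2 ≤ (T.card : ℝ) * ∑ k ∈ T, ‖u k‖ ^ 2 :=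
    sq_sum_le_card_mul_sum_sq
  have h0 : 0 ≤ ∑ k ∈ T, ‖u k‖ := Finset.sum_nonneg fun k _ => norm_nonneg _
  calc ∑ k ∈ T, ‖u k‖ = Real.sqrt ((∑ k ∈ T, ‖u k‖) ^ 2) := (Real.sqrt_sq h0).symm
    _ ≤ Real.sqrt ((T.card : ℝ) * ∑ k ∈ T, ‖u k‖ ^ 2) := Real.sqrt_le_sqrt hcs

lemma cross_bound' {ι κ : Type*} [Fintype ι] [Fintype κ] (c : ι → κ → ℂ) (μ : ℝ)
    (hc : ∀ k l, ‖c k l‖ ≤ μ) (u : ι → ℂ) (v : κ → ℂ) :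
    ‖∑ k, ∑ l, conj (u k) * c k l * v l‖ ≤ μ * (∑ k, ‖u k‖) * (∑ l, ‖v l‖) := by
  calc ‖∑ k, ∑ l, conj (u k) * c k l * v l‖ ≤ ∑ k, ‖∑ l, conj (u k) * c k l * v l‖ :=
        norm_sum_le _ _
    _ ≤ ∑ k, ∑ l, ‖conj (u k) * c k l * v l‖ :=
        Finset.sum_le_sum fun k _ => norm_sum_le _ _
    _ ≤ ∑ k, ∑ l, ‖u k‖ * μ * ‖v l‖ := by
        refine Finset.sum_le_sum fun k _ => Finset.sum_le_sum fun l _ => ?_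
        rw [norm_mul, norm_mul]
        have hck : ‖conj (u k)‖ = ‖u k‖ := by simp
        rw [hck]
        exact mul_le_mul_of_nonneg_right
          (mul_le_mul_of_nonneg_left (hc k l) (norm_nonneg _)) (norm_nonneg _)
    _ = μ * (∑ k, ‖u k‖) * (∑ l, ‖v l‖) := by
        rw [mul_assoc, Finset.sum_mul_sum, Finset.mul_sum]
        refine Finset.sum_congr rfl fun k _ => ?_
        rw [Finset.mul_sum]
        exact Finset.sum_congr rfl fun l _ => by ring

lemma unit_gram_diag {M : ℕ} {n : Type*} [Fintype n] (C : Matrix (Fin M) n ℂ)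
    (hC : unitCols C) (k : n) : (∑ i, conj (C i k) * C i k) = 1 := by
  have h : ∀ i, conj (C i k) * C i k = ((‖C i k‖ ^ 2 : ℝ) : ℂ) := by
    intro i
    rw [mul_comm, Complex.mul_conj, Complex.normSq_eq_norm_sq]
  rw [Finset.sum_congr rfl fun i _ => h i, ← Complex.ofReal_sum, hC k, Complex.ofReal_one]

lemma final_num' (α β m U D : ℝ) (hα : 0 < α) (hβ : 0 < β)
    (hU : 0 ≤ U) (hD : 0 < D) (hcond : m ^ 2 < α * β)
    (h : α * U ^ 2 + β * D ^ 2 ≤ 2 * m * U * D) : False := by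
  rcases eq_or_lt_of_le hU with hU0 | hU0
  · subst hU0
    have : 0 < β * D ^ 2 := mul_pos hβ (pow_pos hD 2)
    nlinarith
  · have hP : 0 < α * U ^ 2 + β * D ^ 2 :=
      add_pos (mul_pos hα (pow_pos hU0 2)) (mul_pos hβ (pow_pos hD 2))
    have hUD : 0 < U ^ 2 * D ^ 2 := mul_pos (pow_pos hU0 2) (pow_pos hD 2)
    have h2 : (α * U ^ 2 + β * D ^ 2) ^ 2 ≤ (2 * m * U * D) ^ 2 := by
      have := mul_self_le_mul_self hP.le h
      nlinarith [this]
    have h3 : (2 * m * U * D) ^ 2 < 4 * (α * β) * (U ^ 2 * D ^ 2) := by nlinarith [hcond, hUD]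
    have h4 : 4 * (α * β) * (U ^ 2 * D ^ 2) ≤ (α * U ^ 2 + β * D ^ 2) ^ 2 := by
      nlinarith [sq_nonneg (α * U ^ 2 - β * D ^ 2)]
    linarith

end Helpers

set_option maxHeartbeats 1000000 in
/-- Corollary 2: when X = supp(x) is known, e is the unique n_e-sparse solution of the
projected ℓ⁰ problem R_X B e' = R_X z. -/
theorem projected_P0_noise_unique_solution
    {M Na Nb : ℕ} (A : Matrix (Fin M) (Fin Na) ℂ) (B : Matrix (Fin M) (Fin Nb) ℂ)
    (hA : unitCols A) (hB : unitCols B)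
    (μa μb μm : ℝ) (hμa : μa = coh A) (hμb : μb = coh B) (hμm : μm = mcoh A B)
    (x : Fin Na → ℂ) (e : Fin Nb → ℂ) (X : Finset (Fin Na))
    (hX : Function.support x = ↑X)
    (nx ne : ℕ) (hnx : l0 x = nx) (hne : l0 e = ne)
    (z : Fin M → ℂ) (hz : z = A.mulVec x + B.mulVec e)
    (hcond : μm ^ 2 * (2 * nx * ne) <
      max (1 - μa * ((nx : ℝ) - 1)) 0 * max (1 - μb * (2 * (ne : ℝ) - 1)) 0) :
    IsUnit ((colsub A X)ᴴ * colsub A X).det ∧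
    (∀ e' : Fin Nb → ℂ, l0 e' ≤ ne →
      (projC A X * B).mulVec e' = (projC A X).mulVec z → e' = e) := by
  classical
  subst hμa hμb hμm hz
  set AX := colsub A X with hAXdef
  set G := (AX)ᴴ * AX with hGdef
  -- card of X
  have hXcard : X.card = nx := by
    rw [← hnx, l0, show {i | x i ≠ 0} = Function.support x from rfl, hX,
      Set.ncard_coe_finset]
  -- positivity of the two factors
  have hm0 : 0 ≤ mcoh A B := mcoh_nonneg' A B
  have hprod : 0 < max (1 - coh A * ((nx : ℝ) - 1)) 0 * max (1 - coh B * (2 * (ne : ℝ) - 1)) 0 := by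
    refine lt_of_le_of_lt ?_ hcond
    have h2 : (0:ℝ) ≤ 2 * (nx : ℝ) * (ne : ℝ) := by positivity
    exact mul_nonneg (sq_nonneg _) h2
  have hα : 0 < 1 - coh A * ((nx : ℝ) - 1) := by
    rcases le_or_gt (1 - coh A * ((nx : ℝ) - 1)) 0 with h | h
    · rw [max_eq_right h, zero_mul] at hprod; exact absurd hprod (lt_irrefl 0)
    · exact h
  have hβ : 0 < 1 - coh B * (2 * (ne : ℝ) - 1) := by
    rcases le_or_gt (1 - coh B * (2 * (ne : ℝ) - 1)) 0 with h | h
    · rw [max_eq_right h, mul_zero] at hprod; exact absurd hprod (lt_irrefl 0)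
    · exact h
  rw [max_eq_left hα.le, max_eq_left hβ.le] at hcond
  -- Gram matrix facts
  have hGapply : ∀ k l : {j // j ∈ X}, G k l = ∑ i, conj (A i k.1) * A i l.1 := by
    intro k l
    simp [hGdef, Matrix.mul_apply, Matrix.conjTranspose_apply, hAXdef, colsub,
      RCLike.star_def]
  have hAXu : unitCols AX := by
    rw [hAXdef]
    intro k
    exact hA k.1
  have hdiagA : ∀ k : {j // j ∈ X}, (∑ i, conj (AX i k) * AX i k) = 1 := by
    intro k
    exact unit_gram_diag AX hAXu k
  have hoffA : ∀ k l : {j // j ∈ X}, k ≠ l → ‖∑ i, conj (AX i k) * AX i l‖ ≤ coh A := by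
    intro k l hkl
    have : k.1 ≠ l.1 := fun h => hkl (Subtype.ext h)
    exact coh_le' A this
  -- the quadratic form expressed via mulVec
  have hquadG : ∀ v : {j // j ∈ X} → ℂ,
      ∑ k, ∑ l, conj (v k) * (∑ i, conj (AX i k) * AX i l) * v l
        = ∑ k, conj (v k) * (G.mulVec v) k := by
    intro v
    refine Finset.sum_congr rfl fun k _ => ?_
    rw [Matrix.mulVec, dotProduct, Finset.mul_sum]
    refine Finset.sum_congr rfl fun l _ => ?_
    rw [hGapply k l]
    simp [hAXdef, colsub]
    ring
  -- Part 1 : invertibility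
  have hdet : IsUnit G.det := by
    rw [isUnit_iff_ne_zero]
    intro h0
    obtain ⟨v, hv, hv0⟩ := (Matrix.exists_mulVec_eq_zero_iff).2 h0
    have hq : (∑ k, ∑ l, conj (v k) * (∑ i, conj (AX i k) * AX i l) * v l) = 0 := by
      rw [hquadG v, hv0]
      simp
    have hkq := key_quad' (fun k l => ∑ i, conj (AX i k) * AX i l) (coh A) (coh_nonneg' A)
      hdiagA hoffA Finset.univ v (fun k hk => absurd (Finset.mem_univ k) hk)
    rw [hq] at hkq
    have hcard : ((Finset.univ : Finset {j // j ∈ X}).card : ℝ) = (nx : ℝ) := by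
      rw [Finset.card_univ, Fintype.card_coe, hXcard]
    rw [hcard] at hkq
    have hvpos : 0 < ∑ k, ‖v k‖ ^ 2 := by
      obtain ⟨k, hk⟩ := Function.ne_iff.1 hv
      refine Finset.sum_pos' (fun k _ => sq_nonneg _) ⟨k, Finset.mem_univ k, ?_⟩
      have : 0 < ‖v k‖ := norm_pos_iff.2 hk
      positivity
    simp only [Complex.zero_re] at hkq
    nlinarith [hα, hvpos, hkq]
  refine ⟨hdet, ?_⟩
  -- Part 2 : uniqueness
  intro e' he' heq
  by_contra hne'
  set d : Fin Nb → ℂ := e' - e with hd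
  have hd0 : d ≠ 0 := fun h => hne' (by
    have := sub_eq_zero.1 h
    exact this)
  -- support of d
  set S : Finset (Fin Nb) := (Finset.univ.filter fun j => e' j ≠ 0) ∪
      (Finset.univ.filter fun j => e j ≠ 0) with hSdef
  have hdS : ∀ j, j ∉ S → d j = 0 := by
    intro j hj
    rw [hSdef, Finset.mem_union] at hj
    push_neg at hj
    obtain ⟨h1, h2⟩ := hj
    simp only [Finset.mem_filter, Finset.mem_univ, true_and, not_not] at h1 h2
    simp [hd, h1, h2]
  have hfiltercard : ∀ v : Fin Nb → ℂ, (Finset.univ.filter fun j => v j ≠ 0).card = l0 v := by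
    intro v
    rw [l0, ← Set.ncard_coe_finset]
    congr 1
    ext j
    simp
  have hScard : (S.card : ℝ) ≤ 2 * (ne : ℝ) := by
    have h1 : S.card ≤ ne + ne := by
      refine le_trans (Finset.card_union_le _ _) ?_
      rw [hfiltercard e', hfiltercard e, hne]
      exact add_le_add he' le_rfl

    calc (S.card : ℝ) ≤ ((ne + ne : ℕ) : ℝ) := by exact_mod_cast h1
      _ = 2 * ne := by push_cast; ring
  -- R_X annihilates the range of A_X
  have hRA : projC A X * AX = 0 := by
    rw [projC]
    have h1 : AX * G⁻¹ * (AX)ᴴ * AX = AX := by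
      rw [Matrix.mul_assoc (AX * G⁻¹) (AX)ᴴ AX, ← hGdef, Matrix.mul_assoc AX G⁻¹ G,
        Matrix.nonsing_inv_mul G hdet, Matrix.mul_one]
    rw [Matrix.sub_mul, Matrix.one_mul, ← hAXdef, ← hGdef, h1, sub_self]
  -- A x = AX (x restricted)
  have hxoff : ∀ k, k ∉ X → x k = 0 := by
    intro k hk
    by_contra h
    exact hk (Finset.mem_coe.1 (hX ▸ Function.mem_support.2 h))
  have hAx : A.mulVec x = AX.mulVec (fun j : {j // j ∈ X} => x j.1) := by
    funext i
    rw [Matrix.mulVec, Matrix.mulVec, dotProduct, dotProduct]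
    rw [show ∑ j : {j // j ∈ X}, AX i j * x j.1 = ∑ k ∈ X, A i k * x k from
      Finset.sum_coe_sort X (fun k => A i k * x k)]
    exact (Finset.sum_subset (Finset.subset_univ X) fun k _ hk => by
      rw [hxoff k hk, mul_zero]).symm
  have hRAx : (projC A X).mulVec (A.mulVec x) = 0 := by
    rw [hAx, Matrix.mulVec_mulVec, hRA, Matrix.zero_mulVec]
  -- projected equation gives R (B d) = 0
  have hR0 : (projC A X).mulVec (B.mulVec d) = 0 := by
    have h1 : (projC A X).mulVec (B.mulVec e') = (projC A X).mulVec (B.mulVec e) := by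
      rw [Matrix.mulVec_mulVec, heq, Matrix.mulVec_add, hRAx, zero_add]
    rw [hd, Matrix.mulVec_sub, Matrix.mulVec_sub, h1, sub_self]
  -- B d lies in the range of A_X
  set u : {j // j ∈ X} → ℂ := (G⁻¹ * (AX)ᴴ).mulVec (B.mulVec d) with hu
  have hBd : AX.mulVec u = B.mulVec d := by
    have h1 : (projC A X).mulVec (B.mulVec d)
        = B.mulVec d - (AX * G⁻¹ * (AX)ᴴ).mulVec (B.mulVec d) := by
      rw [projC, ← hAXdef, ← hGdef, Matrix.sub_mulVec, Matrix.one_mulVec]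
    rw [h1] at hR0
    have h2 : (AX * G⁻¹ * (AX)ᴴ).mulVec (B.mulVec d) = AX.mulVec u := by
      rw [hu, Matrix.mul_assoc, ← Matrix.mulVec_mulVec]
    rw [h2] at hR0
    exact (sub_eq_zero.1 hR0).symm
  -- the crucial zero quantity
  have hzero : ∑ i, ‖AX.mulVec u i - B.mulVec d i‖ ^ 2 = 0 := by
    rw [hBd]
    simp
  rw [sum_sq_sub'] at hzero
  -- identities for the three terms
  have hIA : ∑ i, ‖AX.mulVec u i‖ ^ 2
      = (∑ k, ∑ l, conj (u k) * (∑ i, conj (AX i k) * AX i l) * u l).re := by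
    rw [← inner_mulVec' AX AX u u, Complex.re_sum]
    exact Finset.sum_congr rfl fun i _ => normsq_re' _
  have hIB : ∑ i, ‖B.mulVec d i‖ ^ 2
      = (∑ k, ∑ l, conj (d k) * (∑ i, conj (B i k) * B i l) * d l).re := by
    rw [← inner_mulVec' B B d d, Complex.re_sum]
    exact Finset.sum_congr rfl fun i _ => normsq_re' _
  have hIC : ∑ i, conj (AX.mulVec u i) * (B.mulVec d i)
      = ∑ k, ∑ l, conj (u k) * (∑ i, conj (AX i k) * B i l) * d l :=
    inner_mulVec' AX B u d
  -- lower bounds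
  set U2 := ∑ k, ‖u k‖ ^ 2 with hU2
  set D2 := ∑ j, ‖d j‖ ^ 2 with hD2
  have hU2nn : 0 ≤ U2 := Finset.sum_nonneg fun k _ => sq_nonneg _
  have hD2nn : 0 ≤ D2 := Finset.sum_nonneg fun k _ => sq_nonneg _
  have hbA : (1 - coh A * ((nx : ℝ) - 1)) * U2 ≤ ∑ i, ‖AX.mulVec u i‖ ^ 2 := by
    rw [hIA]
    have hkq := key_quad' (fun k l => ∑ i, conj (AX i k) * AX i l) (coh A) (coh_nonneg' A)
      hdiagA hoffA Finset.univ u (fun k hk => absurd (Finset.mem_univ k) hk)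
    have hcard : ((Finset.univ : Finset {j // j ∈ X}).card : ℝ) = (nx : ℝ) := by
      rw [Finset.card_univ, Fintype.card_coe, hXcard]
    rw [hcard] at hkq
    exact hkq
  have hbB : (1 - coh B * (2 * (ne : ℝ) - 1)) * D2 ≤ ∑ i, ‖B.mulVec d i‖ ^ 2 := by
    rw [hIB]
    have hdiagB : ∀ k, (∑ i, conj (B i k) * B i k) = 1 := fun k => unit_gram_diag B hB k
    have hoffB : ∀ k l, k ≠ l → ‖∑ i, conj (B i k) * B i l‖ ≤ coh B := fun k l h => coh_le' B h
    have hkq := key_quad' (fun k l => ∑ i, conj (B i k) * B i l) (coh B) (coh_nonneg' B)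
      hdiagB hoffB S d hdS
    refine le_trans ?_ hkq
    have : coh B * ((S.card : ℝ) - 1) ≤ coh B * (2 * (ne : ℝ) - 1) := by
      refine mul_le_mul_of_nonneg_left ?_ (coh_nonneg' B)
      linarith [hScard]
    nlinarith [hD2nn, this]
  -- cross bound
  have hoffM : ∀ (k : {j // j ∈ X}) (l : Fin Nb), ‖∑ i, conj (AX i k) * B i l‖ ≤ mcoh A B := by
    intro k l
    exact mcoh_le' A B k.1 l
  have hcross : (∑ i, conj (AX.mulVec u i) * (B.mulVec d i)).re
      ≤ mcoh A B * (Real.sqrt nx * Real.sqrt U2) * (Real.sqrt (2 * (ne : ℝ)) * Real.sqrt D2) := by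
    have h1 : (∑ i, conj (AX.mulVec u i) * (B.mulVec d i)).re
        ≤ ‖∑ i, conj (AX.mulVec u i) * (B.mulVec d i)‖ := Complex.re_le_norm _
    refine h1.trans ?_
    rw [hIC]
    refine le_trans (cross_bound' (fun k l => ∑ i, conj (AX i k) * B i l) (mcoh A B)
      hoffM u d) ?_
    have hl1u : ∑ k, ‖u k‖ ≤ Real.sqrt nx * Real.sqrt U2 := by
      have := l1_le_sqrt' (Finset.univ : Finset {j // j ∈ X}) u
        (fun k hk => absurd (Finset.mem_univ k) hk)
      rw [Finset.card_univ, Fintype.card_coe, hXcard] at this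
      exact this
    have hl1d : ∑ j, ‖d j‖ ≤ Real.sqrt (2 * (ne : ℝ)) * Real.sqrt D2 := by
      refine le_trans (l1_le_sqrt' S d hdS) ?_
      refine mul_le_mul_of_nonneg_right ?_ (Real.sqrt_nonneg _)
      exact Real.sqrt_le_sqrt hScard
    have hu1nn : 0 ≤ ∑ k, ‖u k‖ := Finset.sum_nonneg fun k _ => norm_nonneg _
    have hd1nn : 0 ≤ ∑ j, ‖d j‖ := Finset.sum_nonneg fun k _ => norm_nonneg _
    calc mcoh A B * (∑ k, ‖u k‖) * (∑ j, ‖d j‖)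
        ≤ mcoh A B * (Real.sqrt nx * Real.sqrt U2) * (∑ j, ‖d j‖) := by
          refine mul_le_mul_of_nonneg_right (mul_le_mul_of_nonneg_left hl1u hm0) hd1nn
      _ ≤ mcoh A B * (Real.sqrt nx * Real.sqrt U2) * (Real.sqrt (2 * (ne : ℝ)) * Real.sqrt D2) := by
          exact mul_le_mul_of_nonneg_left hl1d
            (mul_nonneg hm0 (mul_nonneg (Real.sqrt_nonneg _) (Real.sqrt_nonneg _)))
  -- D2 > 0
  have hD2pos : 0 < D2 := by
    obtain ⟨j, hj⟩ := Function.ne_iff.1 hd0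
    refine Finset.sum_pos' (fun k _ => sq_nonneg _) ⟨j, Finset.mem_univ j, ?_⟩
    exact pow_pos (norm_pos_iff.2 hj) 2
  -- assemble
  have hmaster : (1 - coh A * ((nx : ℝ) - 1)) * U2 + (1 - coh B * (2 * (ne : ℝ) - 1)) * D2
      ≤ 2 * (mcoh A B * Real.sqrt nx * Real.sqrt (2 * (ne : ℝ))) * Real.sqrt U2 * Real.sqrt D2 := by
    have := hzero
    nlinarith [hbA, hbB, hcross]
  -- final contradiction
  have hfin := final_num' (1 - coh A * ((nx : ℝ) - 1)) (1 - coh B * (2 * (ne : ℝ) - 1))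
    (mcoh A B * Real.sqrt nx * Real.sqrt (2 * (ne : ℝ))) (Real.sqrt U2) (Real.sqrt D2)
    hα hβ (Real.sqrt_nonneg _) (Real.sqrt_pos.2 hD2pos) ?_ ?_
  · exact hfin
  · have hsq : (mcoh A B * Real.sqrt nx * Real.sqrt (2 * (ne : ℝ))) ^ 2
        = mcoh A B ^ 2 * (2 * (nx : ℝ) * (ne : ℝ)) := by
      have h1 : Real.sqrt (nx : ℝ) ^ 2 = (nx : ℝ) := Real.sq_sqrt (by positivity)
      have h2 : Real.sqrt (2 * (ne : ℝ)) ^ 2 = 2 * (ne : ℝ) := Real.sq_sqrt (by positivity)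
      rw [mul_pow, mul_pow, h1, h2]
      ring
    rw [hsq]
    exact_mod_cast hcond
  · rw [Real.sq_sqrt hU2nn, Real.sq_sqrt hD2nn]
    exact hmaster
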